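/- Let ζ ∈ k be a primitive n-th root of unity and m, t positive divisors of n with n ∤ mt and gcd(t, n/m) = 1, so that N = n/gcd(n, mt) = n/m. Fix an H_n(ζ,m,t)-module-algebra structure (σ, δ) on A = k[u]/(u^n − 1) with σ(u) = ζ·u and δ(u) = γ·u^{t+1} for some nonzero γ ∈ k. Let d be any integer with 0 < d < n and m ≡ −dt (mod n), and let δ₀ ∈ k be any scalar satisfying γ·δ₀·(n−t)_{ζ^m} = ζ^{−m} − 1 in case 2m ≠ n (δ₀ arbitrary in case 2m = n). Then there exists an extension (τ, δ') of (σ, δ) to a D(H_n(ζ,m,t))-module-algebra structure on A with τ(u) = ζ^d·u and δ'(u) = δ₀·u^{n+1−t}. -/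

import Mathlib

/-- The `q`-symbol `(s)_w = 1 + w + w² + ⋯ + w^(s-1)`. -/
def qSym {k : Type*} [Field k] (w : k) (s : ℕ) : k := ∑ i ∈ Finset.range s, w ^ i

/-- An `H_n(ζ,m,t)`-module-algebra structure on `A`, given by the action `σ` of the
grouplike generator `y` and the action `δ` of the `(y^m,1)`-skew primitive `x`;
here `N` is the nilpotency order of `x`. -/
def IsHAction {k A : Type*} [Field k] [CommRing A] [Algebra k A]
    (n m t N : ℕ) (ζ : k) (σ : A ≃ₐ[k] A) (δ : A →ₗ[k] A) : Prop :=
  σ ^ n = 1 ∧ δ 1 = 0 ∧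
  (∀ a c : A, δ (a * c) = (σ ^ m) a * δ c + δ a * c) ∧
  δ ^ N = 0 ∧
  σ.toLinearMap ∘ₗ δ = ζ ^ t • (δ ∘ₗ σ.toLinearMap)

/-- The data of an extension of an `H_n(ζ,m,t)`-module-algebra structure `(σ, δ)` on `A`
to a `D(H_n(ζ,m,t))`-module-algebra structure, given by the action `τ` of the grouplike
`Y` and the action `δ'` of the `(1,Y^t)`-skew primitive `X` of the Drinfel'd double. -/
def IsDHExtension {k A : Type*} [Field k] [CommRing A] [Algebra k A]
    (n m t N : ℕ) (ζ : k) (σ : A ≃ₐ[k] A) (δ : A →ₗ[k] A)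
    (τ : A ≃ₐ[k] A) (δ' : A →ₗ[k] A) : Prop :=
  τ ^ n = 1 ∧ δ' 1 = 0 ∧
  (∀ a c : A, δ' (a * c) = a * δ' c + δ' a * (τ ^ t) c) ∧
  δ' ^ N = 0 ∧
  τ.toLinearMap ∘ₗ δ' = ζ ^ m • (δ' ∘ₗ τ.toLinearMap) ∧
  σ * τ = τ * σ ∧
  δ ∘ₗ τ.toLinearMap = ζ ^ m • (τ.toLinearMap ∘ₗ δ) ∧
  σ.toLinearMap ∘ₗ δ' = (ζ⁻¹ ^ t) • (δ' ∘ₗ σ.toLinearMap) ∧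
  δ ∘ₗ δ' - δ' ∘ₗ δ = (τ ^ t : A ≃ₐ[k] A).toLinearMap - (σ ^ m : A ≃ₐ[k] A).toLinearMap

/-!
In the basis `u^s` everything is diagonal: `σ^e` scales `u^s` by `ζ^(e s)`, while `δ` and `δ'`
raise the degree by `t` and `n - t` with coefficients `γ (s)_w` and `δ₀ (s)_{w⁻¹}`, `w = ζ^m`;
`δ'` is well defined because `(n)_{w⁻¹} = 0`. With `τ = σ^d` every defining relation of the
double becomes a scalar identity: the twisted Leibniz rules come from
`(a + b)_w = (a)_w + w^a (b)_w`, nilpotency from `(s)_{w⁻¹} = 0` for `n/m ∣ s`, which occurs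
among `i, i + (n - t), …, i + (n/m - 1)(n - t)` since `n - t` is a unit mod `n/m`, and
`[δ, δ'] = τ^t - σ^m` from a `q`-symbol identity that needs the normalisation of `γ δ₀`
unless `w = -1`.
-/

section QSymbol

variable {k : Type*} [Field k]

lemma qSym_add (w : k) (a b : ℕ) : qSym w (a + b) = qSym w a + w ^ a * qSym w b := by
  simp only [qSym, Finset.sum_range_add, pow_add, Finset.mul_sum]

lemma qSym_one (w : k) : qSym w 1 = 1 := by simp [qSym]

lemma sub_one_mul_qSym (w : k) (s : ℕ) : (w - 1) * qSym w s = w ^ s - 1 := mul_geom_sum w s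

lemma qSym_eq_zero_of_pow_eq_one {w : k} {s : ℕ} (hw : w ^ s = 1) (hw1 : w ≠ 1) :
    qSym w s = 0 := by
  have h := sub_one_mul_qSym w s
  rw [hw, sub_self] at h
  exact (mul_eq_zero.mp h).resolve_left (sub_ne_zero.mpr hw1)

lemma qSym_commutator {w c : k} {i e e' : ℕ} (hw0 : w ≠ 0) (hw1 : w ≠ 1)
    (hw : w ^ (e + e') = 1) (hc : w ^ 2 = 1 ∨ c * qSym w e' = w⁻¹ - 1) :
    c * (qSym w⁻¹ i * qSym w (i + e') - qSym w i * qSym w⁻¹ (i + e)) = w⁻¹ ^ i - w ^ i := by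
  have hwe : w ^ e = (w ^ e')⁻¹ := eq_inv_of_mul_eq_one_left (by rw [← pow_add, hw])
  have hwi : w ^ i ≠ 0 := pow_ne_zero i hw0
  -- multiplying by `(w - 1)(w⁻¹ - 1)` turns every `q`-symbol into a difference of powers
  apply mul_left_cancel₀ (mul_ne_zero (sub_ne_zero.mpr hw1) (sub_ne_zero.mpr (inv_ne_one.mpr hw1)))
  calc (w - 1) * (w⁻¹ - 1) * (c * (qSym w⁻¹ i * qSym w (i + e') - qSym w i * qSym w⁻¹ (i + e)))
      = c * (((w⁻¹ - 1) * qSym w⁻¹ i) * ((w - 1) * qSym w (i + e'))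
          - ((w - 1) * qSym w i) * ((w⁻¹ - 1) * qSym w⁻¹ (i + e))) := by ring
    _ = c * ((w ^ i - (w ^ i)⁻¹) * (1 - w ^ e')) := by
      simp only [sub_one_mul_qSym, inv_pow, pow_add, hwe]
      field_simp
      ring
    _ = (w ^ i - (w ^ i)⁻¹) * (1 - w) * (c * qSym w e') := by
      rw [← neg_sub (w ^ e'), ← sub_one_mul_qSym]
      ring
    _ = (w - 1) * (w⁻¹ - 1) * (w⁻¹ ^ i - w ^ i) := by
      rw [inv_pow]
      rcases hc with h | h
      · rw [inv_eq_of_mul_eq_one_right (by rw [← sq, ← pow_mul, mul_comm, pow_mul, h, one_pow] :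
          w ^ i * w ^ i = 1), inv_eq_of_mul_eq_one_right (by rw [← sq, h] : w * w = 1)]
        ring
      · rw [h]
        ring

end QSymbol

lemma gcd_mul_eq_of_coprime_div {n m t : ℕ} (hmn : m ∣ n) (hcop : Nat.gcd t (n / m) = 1) :
    Nat.gcd n (m * t) = m := by
  conv_lhs => rw [← Nat.mul_div_cancel' hmn]
  rw [Nat.gcd_mul_left, Nat.gcd_comm, hcop, mul_one]

section PowerBasis

variable {k A : Type*} [Field k] [CommRing A] [Algebra k A] {n : ℕ} {u : A}

def IsScaling (u : A) (w : k) (φ : A →ₗ[k] A) : Prop :=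
  ∀ s : ℕ, φ (u ^ s) = w ^ s • u ^ s

def IsQDeriv (u : A) (c w : k) (e : ℕ) (D : A →ₗ[k] A) : Prop :=
  ∀ s : ℕ, D (u ^ s) = (c * qSym w s) • u ^ (s + e)

lemma AlgEquiv.pow_apply_of_apply_eq_smul {σ : A ≃ₐ[k] A} {w : k} (h : σ u = w • u) (e : ℕ) :
    (σ ^ e) u = w ^ e • u := by
  induction e with
  | zero => simp
  | succ e ih => rw [pow_succ', AlgEquiv.mul_apply, ih, map_smul, h, smul_smul, pow_succ]

lemma isScaling_of_apply_eq_smul {σ : A ≃ₐ[k] A} {w : k} (h : σ u = w • u) :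
    IsScaling u w σ.toLinearMap := fun s => by
  rw [AlgEquiv.toLinearMap_apply, map_pow, h, smul_pow]

lemma linearMap_ext_of_apply_pow (b : Module.Basis (Fin n) k A)
    (hb : ∀ i : Fin n, b i = u ^ (i : ℕ)) {f g : A →ₗ[k] A}
    (h : ∀ s : ℕ, f (u ^ s) = g (u ^ s)) : f = g :=
  b.ext fun i => by rw [hb]; exact h i

lemma IsQDeriv.of_leibniz {D : A →ₗ[k] A} {φ : A → A} {c w : k} {e : ℕ} (hφ : φ u = w • u)
    (hD1 : D 1 = 0) (hD : ∀ a x : A, D (a * x) = φ a * D x + D a * x)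
    (hDu : D u = c • u ^ (e + 1)) : IsQDeriv u c w e D := by
  intro s
  induction s with
  | zero => simp [qSym, hD1]
  | succ s ih =>
    rw [pow_succ', hD, ih, hDu, hφ, add_comm s 1, qSym_add, qSym_one, pow_one]
    simp only [smul_mul_assoc, mul_smul_comm, smul_smul, ← pow_succ', ← pow_add]
    rw [show s + e + 1 = 1 + s + e by ring, show e + 1 + s = 1 + s + e by ring]
    module

lemma IsQDeriv.leibniz (b : Module.Basis (Fin n) k A) (hb : ∀ i : Fin n, b i = u ^ (i : ℕ))
    {D φ : A →ₗ[k] A} {c w : k} {e : ℕ} (hD : IsQDeriv u c w e D) (hφ : IsScaling u w φ)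
    (a x : A) : D (a * x) = φ a * D x + D a * x := by
  have key : (LinearMap.mul k A).compr₂ D =
      ((LinearMap.mul k A) ∘ₗ φ).compl₂ D + (LinearMap.mul k A) ∘ₗ D := by
    refine LinearMap.ext_basis b b fun i j => ?_
    simp only [hb, LinearMap.compr₂_apply, LinearMap.compl₂_apply, LinearMap.add_apply,
      LinearMap.comp_apply, LinearMap.mul_apply']
    rw [← pow_add, hD, hD, hD, hφ, qSym_add]
    simp only [smul_mul_assoc, mul_smul_comm, smul_smul, ← pow_add]
    rw [show (i : ℕ) + ((j : ℕ) + e) = i + j + e by ring,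
      show (i : ℕ) + e + j = i + j + e by ring]
    module
  simpa using LinearMap.congr_fun (LinearMap.congr_fun key a) x

noncomputable def qDeriv (b : Module.Basis (Fin n) k A) (u : A) (c w : k) (e : ℕ) : A →ₗ[k] A :=
  b.constr k fun i => (c * qSym w i) • u ^ ((i : ℕ) + e)

lemma isQDeriv_qDeriv (b : Module.Basis (Fin n) k A) (hb : ∀ i : Fin n, b i = u ^ (i : ℕ))
    (hn : 0 < n) (hu : u ^ n = 1) {c w : k} (e : ℕ) (hw : qSym w n = 0) :
    IsQDeriv u c w e (qDeriv b u c w e) := by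
  intro s
  induction s using Nat.strong_induction_on with
  | _ s ih =>
    rcases lt_or_ge s n with hs | hs
    · rw [← hb ⟨s, hs⟩, qDeriv, b.constr_basis]
    · obtain ⟨r, rfl⟩ : ∃ r, s = r + n := ⟨s - n, by omega⟩
      rw [pow_add, hu, mul_one, ih r (by omega), qSym_add, hw, mul_zero, add_zero,
        add_right_comm, pow_add u _ n, hu, mul_one]

lemma IsQDeriv.pow_apply {D : A →ₗ[k] A} {c w : k} {e : ℕ} (hD : IsQDeriv u c w e D) (j s : ℕ) :
    (D ^ j) (u ^ s) = (c ^ j * ∏ l ∈ Finset.range j, qSym w (s + l * e)) • u ^ (s + j * e) := by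
  induction j with
  | zero => simp
  | succ j ih =>
    rw [pow_succ', Module.End.mul_apply, ih, map_smul, hD, smul_smul, Finset.prod_range_succ]
    congr 1 <;> ring

lemma exists_lt_dvd_add_mul_of_isUnit {M a : ℕ} [NeZero M] (ha : IsUnit (a : ZMod M)) (i : ℕ) :
    ∃ l < M, M ∣ i + l * a := by
  obtain ⟨v, hv⟩ := ha
  refine ⟨(-(i : ZMod M) * ↑v⁻¹).val, ZMod.val_lt _, ?_⟩
  rw [← ZMod.natCast_eq_zero_iff]
  push_cast
  rw [ZMod.natCast_zmod_val, ← hv, mul_assoc, Units.inv_mul, mul_one, add_neg_cancel]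

lemma IsQDeriv.pow_eq_zero (b : Module.Basis (Fin n) k A) (hb : ∀ i : Fin n, b i = u ^ (i : ℕ))
    {D : A →ₗ[k] A} {c w : k} {e M : ℕ} (hD : IsQDeriv u c w e D) (hM : 0 < M) (hwM : w ^ M = 1)
    (hw1 : w ≠ 1) (he : IsUnit (e : ZMod M)) : D ^ M = 0 := by
  have : NeZero M := ⟨hM.ne'⟩
  refine linearMap_ext_of_apply_pow b hb fun s => ?_
  obtain ⟨l, hl, j, hj⟩ := exists_lt_dvd_add_mul_of_isUnit he s
  have hzero : qSym w (s + l * e) = 0 :=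
    qSym_eq_zero_of_pow_eq_one (by rw [hj, pow_mul, hwM, one_pow]) hw1
  rw [hD.pow_apply, Finset.prod_eq_zero (Finset.mem_range.mpr hl) hzero, mul_zero, zero_smul,
    LinearMap.zero_apply]

lemma IsQDeriv.scaling_comp (b : Module.Basis (Fin n) k A) (hb : ∀ i : Fin n, b i = u ^ (i : ℕ))
    {D φ : A →ₗ[k] A} {c w r : k} {e : ℕ} (hD : IsQDeriv u c w e D) (hφ : IsScaling u r φ) :
    φ ∘ₗ D = r ^ e • (D ∘ₗ φ) :=
  linearMap_ext_of_apply_pow b hb fun s => by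
    rw [LinearMap.comp_apply, hD, map_smul, hφ, LinearMap.smul_apply, LinearMap.comp_apply, hφ,
      map_smul, hD]
    module

lemma IsQDeriv.comp_sub_comp (b : Module.Basis (Fin n) k A)
    (hb : ∀ i : Fin n, b i = u ^ (i : ℕ)) (hu : u ^ n = 1) {D D' φ ψ : A →ₗ[k] A} {c c' w : k}
    {e e' : ℕ} (hD : IsQDeriv u c w e D) (hD' : IsQDeriv u c' w⁻¹ e' D')
    (hφ : IsScaling u w⁻¹ φ) (hψ : IsScaling u w ψ) (hee : e + e' = n) (hw0 : w ≠ 0)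
    (hw1 : w ≠ 1) (hwn : w ^ n = 1) (hc : w ^ 2 = 1 ∨ c * c' * qSym w e' = w⁻¹ - 1) :
    D ∘ₗ D' - D' ∘ₗ D = φ - ψ :=
  linearMap_ext_of_apply_pow b hb fun s => by
    simp only [LinearMap.sub_apply, LinearMap.comp_apply]
    rw [hD', map_smul, hD, hD, map_smul, hD', hφ, hψ, smul_smul, smul_smul, add_assoc,
      add_assoc, add_comm e', hee, pow_add, hu, mul_one, ← sub_smul, ← sub_smul]
    congr 1
    linear_combination qSym_commutator (c := c * c') (i := s) hw0 hw1 (hee ▸ hwn) hc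

lemma isDHExtension_of_isQDeriv (b : Module.Basis (Fin n) k A)
    (hb : ∀ i : Fin n, b i = u ^ (i : ℕ)) (hu : u ^ n = 1) {ζ γ δ₀ : k} {m t d N : ℕ}
    {σ : A ≃ₐ[k] A} {δ δ' : A →ₗ[k] A} (hζ : ζ ^ n = 1) (htn : t ≤ n) (hw1 : ζ ^ m ≠ 1)
    (hdt : (ζ ^ d) ^ t = (ζ ^ m)⁻¹) (hσn : σ ^ n = 1) (hσu : σ u = ζ • u)
    (hδ : IsQDeriv u γ (ζ ^ m) t δ) (hδ' : IsQDeriv u δ₀ (ζ ^ m)⁻¹ (n - t) δ')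
    (hN : 0 < N) (hwN : (ζ ^ m) ^ N = 1) (htN : IsUnit ((n - t : ℕ) : ZMod N))
    (hcase : (ζ ^ m) ^ 2 = 1 ∨ γ * δ₀ * qSym (ζ ^ m) (n - t) = (ζ ^ m)⁻¹ - 1) :
    IsDHExtension n m t N ζ σ δ (σ ^ d) δ' := by
  have hw0 : ζ ^ m ≠ 0 := fun h => by simp [h, hN.ne'] at hwN
  have hpow_sub : ∀ x : k, x ^ n = 1 → x ^ (n - t) = (x ^ t)⁻¹ := fun x hx =>
    eq_inv_of_mul_eq_one_left (by rw [← pow_add, Nat.sub_add_cancel htn, hx])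
  have hσe : ∀ e, IsScaling u (ζ ^ e) (σ ^ e).toLinearMap := fun e =>
    isScaling_of_apply_eq_smul (AlgEquiv.pow_apply_of_apply_eq_smul hσu e)
  have hτt : IsScaling u (ζ ^ m)⁻¹ ((σ ^ d) ^ t).toLinearMap := by
    rw [← pow_mul, ← hdt, ← pow_mul]; exact hσe _
  refine ⟨?_, ?_, fun a x => ?_, ?_, ?_, ((Commute.refl σ).pow_right d).eq, ?_, ?_,
    hδ.comp_sub_comp b hb hu hδ' hτt (hσe m) (by omega) hw0 hw1
      (by rw [← pow_mul, mul_comm, pow_mul, hζ, one_pow]) hcase⟩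
  · rw [← pow_mul, mul_comm, pow_mul, hσn, one_pow]
  · simpa [qSym] using hδ' 0
  -- in a commutative ring the `(1, τ^t)`-twisted rule is the `(τ^t, 1)`-twisted one read backwards
  · rw [mul_comm a x, hδ'.leibniz b hb hτt]; simp only [AlgEquiv.toLinearMap_apply]; ring
  · exact hδ'.pow_eq_zero b hb hN (by rw [inv_pow, hwN, inv_one]) (inv_ne_one.mpr hw1) htN
  · rw [hδ'.scaling_comp b hb (hσe d),
      hpow_sub _ (by rw [← pow_mul, mul_comm, pow_mul, hζ, one_pow]), hdt, inv_inv]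
  · rw [hδ.scaling_comp b hb (hσe d), hdt, smul_smul, mul_inv_cancel₀ hw0, one_smul]
  · rw [hδ'.scaling_comp b hb (isScaling_of_apply_eq_smul hσu), hpow_sub _ hζ, inv_pow]

end PowerBasis

theorem stmt_11_general (k : Type*) [Field k]
    (n : ℕ) (hn : 0 < n) (ζ : k) (hζ : IsPrimitiveRoot ζ n)
    (m t : ℕ) (hm0 : 0 < m) (hmn : m ∣ n) (htn : t ∣ n)
    (hnmt : ¬ n ∣ m * t) (hcop : Nat.gcd t (n / m) = 1)
    (A : Type*) [CommRing A] [Algebra k A]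
    (u : A) (b : Module.Basis (Fin n) k A) (hb : ∀ i : Fin n, b i = u ^ (i : ℕ))
    (hu : u ^ n = 1)
    (σ : A ≃ₐ[k] A) (δ : A →ₗ[k] A)
    (hact : IsHAction n m t (n / Nat.gcd n (m * t)) ζ σ δ)
    (γ : k) (hσu : σ u = ζ • u) (hδu : δ u = γ • u ^ (t + 1))
    (d : ℕ) (hmd : n ∣ (m + d * t))
    (δ₀ : k) (hδ₀ : 2 * m ≠ n → γ * δ₀ * qSym (ζ ^ m) (n - t) = ζ⁻¹ ^ m - 1) :
    ∃ (τ : A ≃ₐ[k] A) (δ' : A →ₗ[k] A),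
      IsDHExtension n m t (n / Nat.gcd n (m * t)) ζ σ δ τ δ' ∧
      τ u = ζ ^ d • u ∧ δ' u = δ₀ • u ^ (n + 1 - t) := by
  obtain ⟨hσn, hδ1, hδ, -, -⟩ := hact
  have htn' : t ≤ n := Nat.le_of_dvd hn htn
  have hw1 : ζ ^ m ≠ 1 := hζ.pow_ne_one_of_pos_of_lt hm0.ne' <|
    (Nat.le_of_dvd hn hmn).lt_of_ne (by rintro rfl; exact hnmt (dvd_mul_right m t))
  have hσe : ∀ e, (σ ^ e) u = ζ ^ e • u := AlgEquiv.pow_apply_of_apply_eq_smul hσu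
  have hδq : IsQDeriv u γ (ζ ^ m) t δ := .of_leibniz (hσe m) hδ1 hδ hδu
  have hδ' : IsQDeriv u δ₀ (ζ ^ m)⁻¹ (n - t) (qDeriv b u δ₀ (ζ ^ m)⁻¹ (n - t)) :=
    isQDeriv_qDeriv b hb hn hu _ <| qSym_eq_zero_of_pow_eq_one
      (by rw [inv_pow, ← pow_mul, mul_comm, pow_mul, hζ.pow_eq_one, one_pow, inv_one])
      (inv_ne_one.mpr hw1)
  have htN : IsUnit ((n - t : ℕ) : ZMod (n / m)) := by
    rw [Nat.cast_sub htn', (ZMod.natCast_eq_zero_iff n _).mpr (Nat.div_dvd_of_dvd hmn), zero_sub,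
      IsUnit.neg_iff]
    exact (ZMod.isUnit_iff_coprime t _).mpr hcop
  have hcase : (ζ ^ m) ^ 2 = 1 ∨ γ * δ₀ * qSym (ζ ^ m) (n - t) = (ζ ^ m)⁻¹ - 1 := by
    by_cases h2 : 2 * m = n
    · left; rw [← pow_mul, mul_comm, h2, hζ.pow_eq_one]
    · right; rw [← inv_pow]; exact hδ₀ h2
  refine ⟨σ ^ d, _, ?_, hσe d,
    by simpa [qSym_one, show 1 + (n - t) = n + 1 - t by omega] using hδ' 1⟩
  rw [gcd_mul_eq_of_coprime_div hmn hcop]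
  refine isDHExtension_of_isQDeriv b hb hu hζ.pow_eq_one htn' hw1 ?_ hσn hσu hδq hδ'
    (Nat.div_pos (Nat.le_of_dvd hn hmn) hm0) ?_ htN hcase
  · exact eq_inv_of_mul_eq_one_right <| by
      rw [← pow_mul, ← pow_add, hζ.pow_eq_one_iff_dvd]; exact hmd
  · rw [← pow_mul, Nat.mul_div_cancel' hmn, hζ.pow_eq_one]

/-- Sufficiency part of Theorem 4.17: given `0 < d < n` with `m ≡ -dt (mod n)` and any
`δ₀ ∈ k` satisfying `γ·δ₀·(n-t)_{ζ^m} = ζ^{-m} - 1` when `2m ≠ n` (arbitrary when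
`2m = n`), the `H_n(ζ,m,t)`-module-algebra structure on `A = k[u]/(uⁿ - 1)` extends to a
`D(H_n(ζ,m,t))`-module-algebra structure with `τ(u) = ζ^d·u`, `δ'(u) = δ₀·u^(n+1-t)`. -/
theorem stmt_11 (k : Type*) [Field k] [IsAlgClosed k] [CharZero k]
    (n : ℕ) (hn : 0 < n) (ζ : k) (hζ : IsPrimitiveRoot ζ n)
    (m t : ℕ) (hm0 : 0 < m) (ht0 : 0 < t) (hmn : m ∣ n) (htn : t ∣ n)
    (hnmt : ¬ n ∣ m * t) (hcop : Nat.gcd t (n / m) = 1)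
    (A : Type*) [CommRing A] [Algebra k A]
    (u : A) (b : Module.Basis (Fin n) k A) (hb : ∀ i : Fin n, b i = u ^ (i : ℕ))
    (hu : u ^ n = 1)
    (σ : A ≃ₐ[k] A) (δ : A →ₗ[k] A)
    (hact : IsHAction n m t (n / Nat.gcd n (m * t)) ζ σ δ)
    (γ : k) (hγ : γ ≠ 0) (hσu : σ u = ζ • u) (hδu : δ u = γ • u ^ (t + 1))
    (d : ℕ) (hd0 : 0 < d) (hdn : d < n) (hmd : n ∣ (m + d * t))
    (δ₀ : k) (hδ₀ : 2 * m ≠ n → γ * δ₀ * qSym (ζ ^ m) (n - t) = ζ⁻¹ ^ m - 1) :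
    ∃ (τ : A ≃ₐ[k] A) (δ' : A →ₗ[k] A),
      IsDHExtension n m t (n / Nat.gcd n (m * t)) ζ σ δ τ δ' ∧
      τ u = ζ ^ d • u ∧ δ' u = δ₀ • u ^ (n + 1 - t) :=
  stmt_11_general k n hn ζ hζ m t hm0 hmn htn hnmt hcop A u b hb hu σ δ hact γ hσu hδu d hmd δ₀ hδ₀
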